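/- For every x, y in (0,1) there exist normalized confusion matrices for two groups, with all eight entries strictly positive, simultaneously satisfying false positive parity (FPa·y = FPb·x), predictive equality (FNa·TNb = FNb·TNa), and treatment equality (FNa·FPb = FNb·FPa). -/

import Mathlib

/-!
Take the negatives of both groups split evenly, `TN = FP = x/2` and `TN = FP = y/2`, and the
false negatives `FNa = x (1-x)(1-y)`, `FNb = y (1-x)(1-y)`. Then every negative cell of group `a`
is `x/y` times the corresponding cell of group `b`, which makes all three parity conditions
`ring` identities, and `x (1-y) < 1`, `y (1-x) < 1` leave room for positive true positives.
-/

lemma one_sub_mul_one_sub_mul_one_sub_pos {a b : ℝ} (ha0 : 0 ≤ a) (ha1 : a < 1) (hb : 0 ≤ b) :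
    0 < (1 - a) * (1 - a * (1 - b)) :=
  mul_pos (sub_pos.2 ha1)
    (sub_pos.2 (mul_lt_one_of_nonneg_of_lt_one_left ha0 ha1 (sub_le_self 1 hb)))

theorem stmt
    (x y : ℝ) (hx0 : 0 < x) (hx1 : x < 1) (hy0 : 0 < y) (hy1 : y < 1) :
    ∃ TPa FNa TNa FPa TPb FNb TNb FPb : ℝ,
      0 < TPa ∧ 0 < FNa ∧ 0 < TNa ∧ 0 < FPa ∧
      0 < TPb ∧ 0 < FNb ∧ 0 < TNb ∧ 0 < FPb ∧
      TPa + FNa = 1 - x ∧ TNa + FPa = x ∧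
      TPb + FNb = 1 - y ∧ TNb + FPb = y ∧
      FPa * y = FPb * x ∧ FNa * TNb = FNb * TNa ∧ FNa * FPb = FNb * FPa := by
  have hx1' : 0 < 1 - x := sub_pos.2 hx1
  have hy1' : 0 < 1 - y := sub_pos.2 hy1
  refine ⟨(1 - x) * (1 - x * (1 - y)), x * (1 - x) * (1 - y), x / 2, x / 2,
    (1 - y) * (1 - y * (1 - x)), y * (1 - x) * (1 - y), y / 2, y / 2,
    one_sub_mul_one_sub_mul_one_sub_pos hx0.le hx1 hy0.le, by positivity, by positivity,
    by positivity, one_sub_mul_one_sub_mul_one_sub_pos hy0.le hy1 hx0.le, by positivity,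
    by positivity, by positivity, ?_, ?_, ?_, ?_, ?_, ?_, ?_⟩ <;> ring
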